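/- Let t be an ordered labeled tree with N nodes and let 1 ≤ i ≤ j ≤ 2N. Then there exists at most one node a of t such that a is the first child of its parent p and pos(p) < i ≤ pos(ā) ≤ j < pos(p̄). -/

import Mathlib

/-- Ordered labeled trees (rose trees). -/
inductive RTree (α : Type) : Type
  | node : α → List (RTree α) → RTree α

/-- Extended binary trees: every node has an optional left and right child. -/
inductive BTree (α : Type) : Type
  | nil : BTree α
  | node : α → BTree α → BTree α → BTree α

namespace BTree

/-- Tag sequence of an extended binary tree: opening tag, left subtree,
right subtree, closing tag.  `false` = opening tag, `true` = closing tag. -/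
def btags {α : Type} : BTree α → List (α × Bool)
  | .nil => []
  | .node a l r => (a, false) :: (btags l ++ btags r ++ [(a, true)])

end BTree

namespace RTree

variable {α : Type}

def label : RTree α → α
  | .node a _ => a

def childLabels : RTree α → List α
  | .node _ cs => cs.map label

mutual
/-- Number of nodes of a tree. -/
def size : RTree α → ℕ
  | .node _ cs => 1 + sizeL cs
def sizeL : List (RTree α) → ℕ
  | [] => 0
  | c :: cs => size c + sizeL cs
end

mutual
/-- `XML(t)`: the tag sequence of a depth-first traversal;
`(a, false)` is an opening tag, `(a, true)` a closing tag. -/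
def xml : RTree α → List (α × Bool)
  | .node a cs => (a, false) :: (xmlL cs ++ [(a, true)])
def xmlL : List (RTree α) → List (α × Bool)
  | [] => []
  | c :: cs => xml c ++ xmlL cs
end

mutual
/-- XML tag sequence where each node is identified by its path
(list of child indices from the root). -/
def ptags : RTree α → List ℕ → List (List ℕ × Bool)
  | .node _ cs, p => (p, false) :: (ptagsL cs p 0 ++ [(p, true)])
def ptagsL : List (RTree α) → List ℕ → ℕ → List (List ℕ × Bool)
  | [], _, _ => []
  | c :: cs, p, i => ptags c (p ++ [i]) ++ ptagsL cs p (i + 1)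
end

/-- `XML(t)`, with nodes identified by their paths. -/
def tagList (t : RTree α) : List (List ℕ × Bool) := ptags t []

/-- `pos(v)`: (1-indexed) position of the opening tag of node `v` in `XML(t)`. -/
def posOpen (t : RTree α) (v : List ℕ) : ℕ := (tagList t).idxOf (v, false) + 1

/-- `pos(v̄)`: (1-indexed) position of the closing tag of node `v` in `XML(t)`. -/
def posClose (t : RTree α) (v : List ℕ) : ℕ := (tagList t).idxOf (v, true) + 1

/-- Subtree of `t` rooted at the node with path `p` (if any). -/
def subtreeAt : RTree α → List ℕ → Option (RTree α)
  | t, [] => some t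
  | .node _ cs, i :: p =>
    match cs[i]? with
    | some c => subtreeAt c p
    | none => none

/-- `p` is (the path of) a node of `t`. -/
def IsNode (t : RTree α) (p : List ℕ) : Prop := (subtreeAt t p).isSome

/-- First-child next-sibling encoding of a forest. -/
def fcnsL : List (RTree α) → BTree α
  | [] => .nil
  | .node a cs :: ts => .node a (fcnsL cs) (fcnsL ts)

/-- First-child next-sibling encoding `FCNS(t)`. -/
def fcns (t : RTree α) : BTree α := fcnsL [t]

/-- FCNS encoding of a forest, nodes identified by their paths in the original tree;
`p` is the path of the parent, `i` the index of the first tree of the forest. -/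
def pfcnsL : List (RTree α) → List ℕ → ℕ → BTree (List ℕ)
  | [], _, _ => .nil
  | .node _ cs :: ts, p, i =>
      .node (p ++ [i]) (pfcnsL cs (p ++ [i]) 0) (pfcnsL ts p (i + 1))

/-- `FCNS(t)`, with nodes identified by their paths in `t`. -/
def pfcns : RTree α → BTree (List ℕ)
  | .node _ cs => .node [] (pfcnsL cs [] 0) .nil

/-- `XML(FCNS(t))`, with nodes identified by their paths in `t`. -/
def btagList (t : RTree α) : List (List ℕ × Bool) := (pfcns t).btags

/-- `pos'(v)`: position of the opening tag of `v` in `XML(FCNS(t))`. -/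
def posOpen' (t : RTree α) (v : List ℕ) : ℕ := (btagList t).idxOf (v, false) + 1

/-- `pos'(v̄)`: position of the closing tag of `v` in `XML(FCNS(t))`. -/
def posClose' (t : RTree α) (v : List ℕ) : ℕ := (btagList t).idxOf (v, true) + 1

/-- A tree is valid against a DTD `D` if for every node, the word of labels of
its children belongs to `D` applied to the node's label. -/
def Valid (D : α → List α → Prop) (t : RTree α) : Prop :=
  ∀ p st, subtreeAt t p = some st → D st.label st.childLabels

end RTree

section IndexOfBEq

variable {β : Type} [BEq β] [LawfulBEq β]

theorem idxOf_cons_self (a : β) (l : List β) : (a :: l).idxOf a = 0 := by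
  simp [List.idxOf_cons]

theorem idxOf_cons_ne {b a : β} (l : List β) (h : b ≠ a) :
    (b :: l).idxOf a = l.idxOf a + 1 := by
  have hb : (b == a) = false := beq_eq_false_iff_ne.mpr h
  simp [List.idxOf_cons, hb]

theorem idxOf_append_of_not_mem {a : β} :
    ∀ {l₁ : List β} (l₂ : List β), a ∉ l₁ →
      (l₁ ++ l₂).idxOf a = l₁.length + l₂.idxOf a
  | [], l₂, _ => by simp
  | b :: l₁, l₂, h => by
    have hb : b ≠ a := by rintro rfl; exact h (List.mem_cons_self)
    rw [List.cons_append, idxOf_cons_ne _ hb,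
      idxOf_append_of_not_mem l₂ (fun hm => h (List.mem_cons_of_mem _ hm))]
    simp; omega

theorem getElem_idxOf {a : β} {l : List β} (h : l.idxOf a < l.length) :
    l[l.idxOf a] = a := by
  have := List.findIdx_getElem (p := (· == a)) (xs := l) (w := h)
  exact eq_of_beq this

end IndexOfBEq

section Aux

namespace RTree

variable {α : Type}

mutual
theorem mem_ptags_prefix : ∀ (s : RTree α) (p : List ℕ) (x : List ℕ × Bool),
    x ∈ ptags s p → p <+: x.1
  | .node a cs, p, x, hx => by
    rw [ptags, List.mem_cons, List.mem_append, List.mem_singleton] at hx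
    rcases hx with h | h | h
    · subst h; exact List.prefix_rfl
    · obtain ⟨k, _, hk⟩ := mem_ptagsL_prefix cs p 0 x h
      exact (p.prefix_append [k]).trans hk
    · subst h; exact List.prefix_rfl

theorem mem_ptagsL_prefix : ∀ (cs : List (RTree α)) (p : List ℕ) (i : ℕ) (x : List ℕ × Bool),
    x ∈ ptagsL cs p i → ∃ k, i ≤ k ∧ p ++ [k] <+: x.1
  | [], p, i, x, hx => by simp [ptagsL] at hx
  | c :: cs, p, i, x, hx => by
    rw [ptagsL, List.mem_append] at hx
    rcases hx with h | h
    · exact ⟨i, le_rfl, mem_ptags_prefix c (p ++ [i]) x h⟩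
    · obtain ⟨k, hk, hpre⟩ := mem_ptagsL_prefix cs p (i+1) x h
      exact ⟨k, by omega, hpre⟩
end

end RTree

end Aux

namespace RTree
variable {α : Type}

theorem ptagsL_split : ∀ (cs : List (RTree α)) (k : ℕ) (c : RTree α) (p : List ℕ) (i : ℕ),
    cs[k]? = some c →
    ∃ X Y, ptagsL cs p i = X ++ ptags c (p ++ [i + k]) ++ Y ∧
      ∀ x ∈ X, ∃ j, j < i + k ∧ p ++ [j] <+: x.1
  | [], k, c, p, i, h => by simp at h
  | c' :: cs, 0, c, p, i, h => by
    simp only [List.getElem?_cons_zero, Option.some.injEq] at h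
    subst h
    exact ⟨[], ptagsL cs p (i+1), by simp [ptagsL], by simp⟩
  | c' :: cs, k+1, c, p, i, h => by
    simp only [List.getElem?_cons_succ] at h
    obtain ⟨X, Y, hXY, hX⟩ := ptagsL_split cs k c p (i+1) h
    refine ⟨ptags c' (p ++ [i]) ++ X, Y, ?_, ?_⟩
    · rw [ptagsL, hXY]
      have : i + 1 + k = i + (k + 1) := by omega
      rw [this]
      simp [List.append_assoc]
    · intro x hx
      rw [List.mem_append] at hx
      rcases hx with h' | h'
      · exact ⟨i, by omega, mem_ptags_prefix c' (p ++ [i]) x h'⟩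
      · obtain ⟨j, hj, hpre⟩ := hX x h'
        exact ⟨j, by omega, hpre⟩

theorem ptags_decomp : ∀ (q : List ℕ) (r : RTree α) (p : List ℕ) (s : RTree α),
    subtreeAt r q = some s →
    ∃ A B, ptags r p = A ++ ptags s (p ++ q) ++ B ∧ ∀ x ∈ A, x.1 ≠ p ++ q
  | [], r, p, s, h => by
    rw [subtreeAt] at h
    cases h
    exact ⟨[], [], by simp, by simp⟩
  | k :: q', .node a cs, p, s, h => by
    rw [subtreeAt] at h
    rcases hc : cs[k]? with _ | c
    · rw [hc] at h; exact absurd h (by simp)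
    · rw [hc] at h
      obtain ⟨A', B', hAB', hA'⟩ := ptags_decomp q' c (p ++ [k]) s h
      obtain ⟨X, Y, hXY, hX⟩ := ptagsL_split cs k c p 0 hc
      simp only [Nat.zero_add] at hXY hX
      have hpq : p ++ k :: q' = p ++ [k] ++ q' := by simp
      refine ⟨(p, false) :: (X ++ A'), B' ++ Y ++ [(p, true)], ?_, ?_⟩
      · rw [ptags, hXY, hAB', hpq]
        simp [List.append_assoc]
      · intro x hx
        rw [List.mem_cons, List.mem_append] at hx
        rcases hx with h' | h' | h'
        · subst h'
          intro he
          have := congrArg List.length he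
          simp at this
        · obtain ⟨j, hj, r', hr'⟩ := hX x h'
          intro he
          rw [he] at hr'
          simp [List.append_assoc] at hr'
          omega
        · intro he
          exact hA' x h' (by rw [he, hpq])

end RTree

namespace RTree
variable {α : Type}

theorem node_decomp (t : RTree α) (u : List ℕ) (h : IsNode t u) :
    ∃ A inner B, tagList t = A ++ (u, false) :: (inner ++ (u, true) :: B) ∧
      (∀ x ∈ inner, u <+: x.1 ∧ x.1 ≠ u) ∧
      posOpen t u = A.length + 1 ∧ posClose t u = A.length + inner.length + 2 := by
  rw [IsNode, Option.isSome_iff_exists] at h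
  obtain ⟨s, hs⟩ := h
  obtain ⟨A, B, hAB, hA⟩ := ptags_decomp u t [] s hs
  simp only [List.nil_append] at hAB hA
  obtain ⟨a, cs⟩ := s
  rw [ptags] at hAB
  have hAB' : tagList t = A ++ ((u, false) :: (ptagsL cs u 0 ++ (u, true) :: B)) := by
    rw [tagList, hAB]; simp
  refine ⟨A, ptagsL cs u 0, B, hAB', ?_, ?_, ?_⟩
  · intro x hx
    obtain ⟨k, _, hk⟩ := mem_ptagsL_prefix cs u 0 x hx
    refine ⟨(u.prefix_append [k]).trans hk, ?_⟩
    intro he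
    have := hk.length_le
    rw [he] at this
    simp at this
  · have hnm : (u, false) ∉ A := fun hm => hA _ hm rfl
    rw [posOpen, hAB', idxOf_append_of_not_mem _ hnm, idxOf_cons_self]
  · have hnm : (u, true) ∉ A := fun hm => hA _ hm rfl
    have hni : (u, true) ∉ ptagsL cs u 0 := by
      intro hm
      obtain ⟨k, _, hk⟩ := mem_ptagsL_prefix cs u 0 _ hm
      have := hk.length_le
      simp at this
    rw [posClose, hAB', idxOf_append_of_not_mem _ hnm,
      idxOf_cons_ne _ (by simp), idxOf_append_of_not_mem _ hni, idxOf_cons_self]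
    omega

theorem prefix_of_between (t : RTree α) (u v : List ℕ) (hu : IsNode t u)
    (h1 : posOpen t u < posClose t v) (h2 : posClose t v < posClose t u) :
    u <+: v := by
  obtain ⟨A, inner, B, hL, hinner, ho, hc⟩ := node_decomp t u hu
  have hL' : tagList t = (A ++ [(u, false)]) ++ (inner ++ ((u, true) :: B)) := by
    rw [hL]; simp
  rw [ho, posClose] at h1
  rw [hc, posClose] at h2
  have hk1 : A.length + 1 ≤ (tagList t).idxOf (v, true) := by omega
  have hk2 : (tagList t).idxOf (v, true) ≤ A.length + inner.length := by omega
  have hlenL : (tagList t).length = A.length + inner.length + B.length + 2 := by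
    rw [hL]; simp; omega
  have hklen : (tagList t).idxOf (v, true) < (tagList t).length := by omega
  have hget := getElem_idxOf hklen
  have hEq := List.getElem_of_eq hL' hklen
  have hlen1 : (A ++ [(u, false)]).length ≤ (tagList t).idxOf (v, true) := by
    simp; omega
  rw [List.getElem_append_right hlen1] at hEq
  have hlen2 : (tagList t).idxOf (v, true) - (A ++ [(u, false)]).length <
      inner.length := by simp; omega
  rw [List.getElem_append_left hlen2] at hEq
  rw [hget] at hEq
  have hmem : (v, true) ∈ inner := hEq ▸ List.getElem_mem _
  exact (hinner _ hmem).1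

theorem subtreeAt_append : ∀ (q q' : List ℕ) (t : RTree α),
    subtreeAt t (q ++ q') = (subtreeAt t q).bind (fun s => subtreeAt s q')
  | [], q', t => by simp [subtreeAt]
  | k :: q, q', .node a cs => by
    rw [List.cons_append, subtreeAt, subtreeAt]
    rcases hc : cs[k]? with _ | c
    · simp
    · simp only
      exact subtreeAt_append q q' c

theorem isNode_parent (t : RTree α) (p : List ℕ) (k : ℕ) (h : IsNode t (p ++ [k])) :
    IsNode t p := by
  rw [IsNode, subtreeAt_append] at h
  rcases hp : subtreeAt t p with _ | s
  · rw [hp] at h; simp at h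
  · rw [IsNode, hp]; rfl

end RTree

theorem prefix_aux {p₁ p₂ : List ℕ} (h12 : p₁ <+: p₂ ++ [0]) (h21 : p₂ <+: p₁ ++ [0])
    (hlen : p₁.length ≤ p₂.length) (hne : p₂ ≠ p₁ ++ [0]) : p₁ = p₂ := by
  have h1 : p₁ <+: p₂ :=
    List.prefix_of_prefix_length_le h12 (p₂.prefix_append [0]) hlen
  have hle : p₂.length ≤ p₁.length + 1 := by
    have := h21.length_le; simpa using this
  rcases eq_or_lt_of_le hle with he | hlt
  · exact absurd (h21.eq_of_length (by simpa using he)) hne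
  · exact h1.eq_of_length (by omega)

/-- `w` is a later sibling of `v` (as paths): same parent, larger last index. -/
def LaterSib (w v : List ℕ) : Prop := ∃ q i j, v = q ++ [i] ∧ w = q ++ [j] ∧ i < j

/-- Let `t` have `N` nodes (so `XML(t)` has length `2N`) and let
`1 ≤ i ≤ j ≤ 2N`.  Then there is at most one node `a` of `t` such that `a` is the
first child of its parent `p` (i.e. `a = p ++ [0]`) and
`pos(p) < i ≤ pos(ā) ≤ j < pos(p̄)`. -/
theorem at_most_one_critical {α : Type} (t : RTree α) (i j : ℕ)
    (hi : 1 ≤ i) (hij : i ≤ j) (hj : j ≤ (RTree.tagList t).length)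
    (p₁ p₂ : List ℕ)
    (h₁ : RTree.IsNode t (p₁ ++ [0])) (h₂ : RTree.IsNode t (p₂ ++ [0]))
    (c₁ : RTree.posOpen t p₁ < i ∧ i ≤ RTree.posClose t (p₁ ++ [0]) ∧
      RTree.posClose t (p₁ ++ [0]) ≤ j ∧ j < RTree.posClose t p₁)
    (c₂ : RTree.posOpen t p₂ < i ∧ i ≤ RTree.posClose t (p₂ ++ [0]) ∧
      RTree.posClose t (p₂ ++ [0]) ≤ j ∧ j < RTree.posClose t p₂) :
    p₁ ++ [0] = p₂ ++ [0] := by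
  obtain ⟨c11, c12, c13, c14⟩ := c₁
  obtain ⟨c21, c22, c23, c24⟩ := c₂
  have hn1 : RTree.IsNode t p₁ := RTree.isNode_parent t p₁ 0 h₁
  have hn2 : RTree.IsNode t p₂ := RTree.isNode_parent t p₂ 0 h₂
  have h12 : p₁ <+: p₂ ++ [0] :=
    RTree.prefix_of_between t p₁ (p₂ ++ [0]) hn1 (by omega) (by omega)
  have h21 : p₂ <+: p₁ ++ [0] :=
    RTree.prefix_of_between t p₂ (p₁ ++ [0]) hn2 (by omega) (by omega)
  rcases le_total p₁.length p₂.length with hl | hl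
  · rw [prefix_aux h12 h21 hl (fun he => by rw [he] at c24; omega)]
  · rw [prefix_aux h21 h12 hl (fun he => by rw [he] at c14; omega)]
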